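/- Let Γ' be a group, Γ and K subgroups of Γ', and S a left Γ-set. Let Γ act diagonally on S × (Γ'/K) via the inclusion Γ ≤ Γ' and left multiplication on Γ'/K. Choose a complete set of representatives g ∈ Γ' of the double coset space Γ\Γ'/K. Then there is a bijection between the quotient (S × (Γ'/K))/Γ and the disjoint union over these representatives g of the quotients S/(Γ ∩ gKg⁻¹), where Γ ∩ gKg⁻¹ acts on S through its inclusion into Γ. -/
import Mathlib

open MulAction

section Aux

variable {Γ' : Type*} [Group Γ'] {Γ K : Subgroup Γ'} {S : Type*} [MulAction Γ S]
variable {D : Set Γ'}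
variable (hD : ∀ x : Γ', ∃! d, d ∈ D ∧ ∃ γ ∈ Γ, ∃ k ∈ K, x = γ * d * k)

/-- `Γ ∩ dKd⁻¹` as a subgroup of `Γ`. -/
abbrev Hd (Γ K : Subgroup Γ') (d : Γ') : Subgroup Γ :=
  (K.map (MulAut.conj d).toMonoidHom).comap Γ.subtype

noncomputable def dcRep (g : Γ') : Γ' := (hD g).choose

lemma dcRep_mem (g : Γ') : dcRep hD g ∈ D := (hD g).choose_spec.1.1

lemma dcRep_spec (g : Γ') : ∃ γ ∈ Γ, ∃ k ∈ K, g = γ * dcRep hD g * k :=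
  (hD g).choose_spec.1.2

lemma dcRep_unique {g d : Γ'} (h1 : d ∈ D)
    (h2 : ∃ γ ∈ Γ, ∃ k ∈ K, g = γ * d * k) : dcRep hD g = d :=
  ((hD g).choose_spec.2 d ⟨h1, h2⟩).symm

noncomputable def dcγ (g : Γ') : Γ :=
  ⟨(dcRep_spec hD g).choose, (dcRep_spec hD g).choose_spec.1⟩

noncomputable def dcκ (g : Γ') : K :=
  ⟨(dcRep_spec hD g).choose_spec.2.choose,
    (dcRep_spec hD g).choose_spec.2.choose_spec.1⟩

lemma dc_eq (g : Γ') : g = ↑(dcγ hD g) * dcRep hD g * ↑(dcκ hD g) :=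
  (dcRep_spec hD g).choose_spec.2.choose_spec.2

/-- The class of `γ⁻¹ • s` in `S/(Γ ∩ dKd⁻¹)` only depends on the double coset data. -/
lemma classEq {d : Γ'} {γ₁ γ₂ : Γ} {k₁ k₂ : K}
    (h : (γ₁ : Γ') * d * ↑k₁ = ↑γ₂ * d * ↑k₂) (s : S) :
    (Quotient.mk (orbitRel (Hd Γ K d) S) (γ₁⁻¹ • s)) =
      Quotient.mk (orbitRel (Hd Γ K d) S) (γ₂⁻¹ • s) := by
  have key : ((γ₁⁻¹ * γ₂ : Γ) : Γ') = d * (↑k₁ * (↑k₂)⁻¹) * d⁻¹ := by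
    have h2 : (γ₂ : Γ') = ↑γ₁ * (d * ↑k₁) * (d * ↑k₂)⁻¹ := by
      rw [eq_mul_inv_iff_mul_eq, ← mul_assoc, ← mul_assoc, h]
    push_cast
    rw [h2]; group
  have mem : (γ₁⁻¹ * γ₂ : Γ) ∈ Hd Γ K d := by
    refine Subgroup.mem_comap.mpr ⟨↑k₁ * (↑k₂)⁻¹, K.mul_mem k₁.2 (K.inv_mem k₂.2), ?_⟩
    simpa [MulAut.conj_apply] using key.symm
  refine Quotient.sound ⟨⟨γ₁⁻¹ * γ₂, mem⟩, ?_⟩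
  show (γ₁⁻¹ * γ₂ : Γ) • (γ₂⁻¹ • s) = γ₁⁻¹ • s
  rw [smul_smul]
  congr 1
  group

/-- The map `S × Γ' → Σ d ∈ D, S/(Γ ∩ dKd⁻¹)`. -/
noncomputable def dcFun (s : S) (g : Γ') :
    Σ d : D, Quotient (orbitRel (Hd Γ K (d : Γ')) S) :=
  ⟨⟨dcRep hD g, dcRep_mem hD g⟩,
    Quotient.mk (orbitRel (Hd Γ K (dcRep hD g)) S) ((dcγ hD g)⁻¹ • s)⟩

lemma dcFun_eq (s : S) (g : Γ') {d : Γ'} (hd : d ∈ D) (γ : Γ) (k : K)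
    (hg : g = ↑γ * d * ↑k) :
    dcFun hD s g = ⟨⟨d, hd⟩, Quotient.mk (orbitRel (Hd Γ K d) S) (γ⁻¹ • s)⟩ := by
  have e : dcRep hD g = d := dcRep_unique hD hd ⟨↑γ, γ.2, ↑k, k.2, hg⟩
  subst e
  refine Sigma.ext rfl (heq_of_eq ?_)
  exact classEq ((dc_eq hD g).symm.trans hg) s

lemma dcFun_right (s : S) (g : Γ') (k : K) : dcFun hD s (g * ↑k) = dcFun hD s g := by
  obtain ⟨γ₀, k₀, hg⟩ : ∃ (γ₀ : Γ) (k₀ : K), g = ↑γ₀ * dcRep hD g * ↑k₀ :=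
    ⟨dcγ hD g, dcκ hD g, dc_eq hD g⟩
  rw [dcFun_eq hD s (g * ↑k) (dcRep_mem hD g) γ₀ (k₀ * k)
      (by conv_lhs => rw [hg]
          push_cast; group),
    dcFun_eq hD s g (dcRep_mem hD g) γ₀ k₀ hg]

lemma dcFun_left (s : S) (g : Γ') (γ : Γ) :
    dcFun hD (γ • s) (↑γ * g) = dcFun hD s g := by
  obtain ⟨γ₀, k₀, hg⟩ : ∃ (γ₀ : Γ) (k₀ : K), g = ↑γ₀ * dcRep hD g * ↑k₀ :=
    ⟨dcγ hD g, dcκ hD g, dc_eq hD g⟩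
  rw [dcFun_eq hD (γ • s) (↑γ * g) (dcRep_mem hD g) (γ * γ₀) k₀
      (by conv_lhs => rw [hg]
          push_cast; group),
    dcFun_eq hD s g (dcRep_mem hD g) γ₀ k₀ hg]
  congr 1
  rw [mul_inv_rev, ← smul_smul, inv_smul_smul]

lemma dcFun_inj {s s' : S} {g g' : Γ'} (h : dcFun hD s g = dcFun hD s' g') :
    ∃ γ₀ : Γ, γ₀ • s' = s ∧ ((γ₀ : Γ') * g')⁻¹ * g ∈ K := by
  have e : dcRep hD g' = dcRep hD g := (congrArg (fun t => (t.1 : Γ')) h).symm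
  set d := dcRep hD g with hdd
  obtain ⟨γ, k, hg⟩ : ∃ (γ : Γ) (k : K), g = ↑γ * d * ↑k :=
    ⟨dcγ hD g, dcκ hD g, dc_eq hD g⟩
  obtain ⟨γ', k', hg'⟩ : ∃ (γ' : Γ) (k' : K), g' = ↑γ' * d * ↑k' :=
    ⟨dcγ hD g', dcκ hD g', by
      conv_lhs => rw [dc_eq hD g']
      rw [e]⟩
  rw [dcFun_eq hD s g (dcRep_mem hD g) γ k hg,
    dcFun_eq hD s' g' (dcRep_mem hD g) γ' k' hg'] at h
  have hq : (Quotient.mk (orbitRel (Hd Γ K d) S) (γ⁻¹ • s)) =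
      Quotient.mk (orbitRel (Hd Γ K d) S) (γ'⁻¹ • s') := by
    simpa using h
  obtain ⟨hh, hhh⟩ := Quotient.exact hq
  obtain ⟨kh, khK, hkh⟩ := Subgroup.mem_comap.mp hh.2
  refine ⟨γ * ↑hh * γ'⁻¹, ?_, ?_⟩
  · have : (γ * ↑hh * γ'⁻¹) • s' = γ • ((hh : Γ) • (γ'⁻¹ • s')) := by
      rw [smul_smul, smul_smul, mul_assoc]
    have hhh' : (hh : Γ) • (γ'⁻¹ • s') = γ⁻¹ • s := hhh
    rw [this, hhh', smul_inv_smul]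
  · have hcast : ((γ * ↑hh * γ'⁻¹ : Γ) : Γ') = ↑γ * (d * kh * d⁻¹) * (↑γ')⁻¹ := by
      have : ((hh : Γ) : Γ') = d * kh * d⁻¹ := by
        simpa [MulAut.conj_apply] using hkh.symm
      push_cast
      rw [this]
    have expr : ((↑(γ * ↑hh * γ'⁻¹) : Γ') * g')⁻¹ * g = (↑k')⁻¹ * kh⁻¹ * ↑k := by
      rw [hcast, hg, hg']
      group
    rw [expr]
    exact K.mul_mem (K.mul_mem (K.inv_mem k'.2) (K.inv_mem khK)) k.2

end Aux

open MulAction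

/-- The computation underlying Lemma `lem-deligne-ind` (§4.1.2 of the paper): for subgroups
`Γ, K ≤ Γ'`, a left `Γ`-set `S`, and a complete set `D` of representatives of the double
cosets `Γ\Γ'/K`, the quotient `(S × Γ'/K)/Γ` is in bijection with the disjoint union over
`d ∈ D` of the quotients `S/(Γ ∩ dKd⁻¹)`, where `Γ ∩ dKd⁻¹` (viewed as a subgroup of `Γ`)
acts on `S` through its inclusion into `Γ`. -/
theorem double_coset_quotient_equiv
    {Γ' : Type*} [Group Γ'] (Γ K : Subgroup Γ') (S : Type*) [MulAction Γ S]
    (D : Set Γ')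
    (hD : ∀ x : Γ', ∃! d, d ∈ D ∧ ∃ γ ∈ Γ, ∃ k ∈ K, x = γ * d * k) :
    Nonempty
      (Quotient (orbitRel Γ (S × (Γ' ⧸ K))) ≃
        Σ d : D, Quotient (orbitRel
          ((K.map (MulAut.conj (d : Γ')).toMonoidHom).comap Γ.subtype) S)) := by
  -- the descended map on `S × (Γ' ⧸ K)`
  let f1 : S × (Γ' ⧸ K) → Σ d : D, Quotient (orbitRel (Hd Γ K (d : Γ')) S) :=
    fun p => Quotient.liftOn' p.2 (fun g => dcFun hD p.1 g) (by
      intro g g' hr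
      have hk : g⁻¹ * g' ∈ K := QuotientGroup.leftRel_apply.mp hr
      have hgg : g' = g * (⟨g⁻¹ * g', hk⟩ : K) := by simp
      show dcFun hD p.1 g = dcFun hD p.1 g'
      rw [hgg, dcFun_right])
  have f1_mk : ∀ (s : S) (g : Γ'), f1 (s, QuotientGroup.mk g) = dcFun hD s g :=
    fun s g => rfl
  -- the descended map on the orbit quotient
  let f : Quotient (orbitRel Γ (S × (Γ' ⧸ K))) →
      Σ d : D, Quotient (orbitRel (Hd Γ K (d : Γ')) S) :=
    Quotient.lift f1 (by
      rintro ⟨s, x⟩ ⟨s', x'⟩ hab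
      obtain ⟨γ, hγ⟩ := hab
      obtain ⟨g', rfl⟩ := QuotientGroup.mk_surjective x'
      have h1 : s = γ • s' := congrArg Prod.fst hγ |>.symm
      have h2 : x = γ • (QuotientGroup.mk g' : Γ' ⧸ K) := congrArg Prod.snd hγ |>.symm
      have h3 : x = QuotientGroup.mk ((γ : Γ') * g') := h2
      rw [h1, h3, f1_mk, f1_mk]
      exact dcFun_left hD s' g' γ)
  refine ⟨Equiv.ofBijective f ⟨?_, ?_⟩⟩
  · -- injectivity
    intro a b hab
    induction a using Quotient.inductionOn with | _ p =>
    induction b using Quotient.inductionOn with | _ q =>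
    obtain ⟨s, x⟩ := p
    obtain ⟨s', x'⟩ := q
    obtain ⟨g, rfl⟩ := QuotientGroup.mk_surjective x
    obtain ⟨g', rfl⟩ := QuotientGroup.mk_surjective x'
    have h : dcFun hD s g = dcFun hD s' g' := hab
    obtain ⟨γ₀, hs, hk⟩ := dcFun_inj hD h
    refine Quotient.sound ⟨γ₀, ?_⟩
    refine Prod.ext hs ?_
    show γ₀ • (QuotientGroup.mk g' : Γ' ⧸ K) = QuotientGroup.mk g
    show QuotientGroup.mk ((γ₀ : Γ') * g') = QuotientGroup.mk g
    exact QuotientGroup.eq.mpr hk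
  · -- surjectivity
    rintro ⟨⟨d, hd⟩, q⟩
    obtain ⟨s, rfl⟩ := Quotient.exists_rep q
    refine ⟨Quotient.mk _ (s, QuotientGroup.mk d), ?_⟩
    have : f (Quotient.mk _ (s, QuotientGroup.mk d)) = dcFun hD s d := rfl
    rw [this, dcFun_eq hD s d hd 1 1 (by simp)]
    simp
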